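/- Let R ∈ H and let T be a ring containing R properly such that Spec(R) = Spec(T). Then R is a divided ring if and only if T is a divided ring. -/

import Mathlib

/-- A subset `S` of a ring `A` is (the underlying set of) a prime ideal of the subring `B`. -/
def IsPrimeIdealSetOf {A : Type*} [CommRing A] (B : Subring A) (S : Set A) : Prop :=
  ∃ I : Ideal B, I.IsPrime ∧ Subtype.val '' (I : Set B) = S

/-- `Spec(R) = Spec(T)` for a subring `R` of `T`: a subset of `T` is a prime ideal of `T`
iff it is a prime ideal of `R`. -/
def SpecEq {T : Type*} [CommRing T] (R : Subring T) : Prop :=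
  ∀ S : Set T, (∃ J : Ideal T, J.IsPrime ∧ (J : Set T) = S) ↔ IsPrimeIdealSetOf R S
/-- An ideal `P` of `R` is divided if it is comparable with every ideal of `R`. -/
def Ideal.IsDivided {R : Type*} [CommRing R] (P : Ideal R) : Prop :=
  ∀ I : Ideal R, I ≤ P ∨ P ≤ I

/-- `R ∈ H` : the nilradical of `R` is a divided prime ideal. -/
def MemH (R : Type*) [CommRing R] : Prop :=
  (nilradical R).IsPrime ∧ (nilradical R).IsDivided

/-- A ring is divided if every prime ideal of it is divided. -/
def DividedRing (R : Type*) [CommRing R] : Prop :=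
  ∀ P : Ideal R, P.IsPrime → P.IsDivided

/-!
An ideal `P` is divided iff `P ⊆ (x)` for every `x ∉ P`. If `Spec R = Spec T`, every maximal
ideal of `T` lies in `R`, so every element of `T \ R` is a unit of `T`. For a prime `P` of `R`
that is also a prime of `T`, the conditions `P ⊆ xR` (for `x ∈ R \ P`) and `P ⊆ xT`
(for `x ∈ T \ P`) are then equivalent: `x ∉ R` makes `xT = T`, and a factorization `p = t x`
with `t ∉ R` would give `x = t⁻¹ p ∈ P`.
-/

theorem Ideal.isDivided_iff_le_span_singleton {A : Type*} [CommRing A] {P : Ideal A} :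
    P.IsDivided ↔ ∀ x ∉ P, P ≤ Ideal.span {x} := by
  constructor
  · intro hP x hx
    exact (hP _).resolve_left fun h => hx (h (Ideal.mem_span_singleton_self x))
  · intro hP I
    by_contra! h
    obtain ⟨x, hxI, hxP⟩ := SetLike.not_le_iff_exists.mp h.1
    exact h.2 ((hP x hxP).trans ((Ideal.span_singleton_le_iff_mem I).mpr hxI))

namespace Subring

variable {T : Type*} [CommRing T] {R : Subring T}

theorem coe_mem_iff_of_image_eq {P : Ideal R} {Q : Ideal T}
    (hPQ : Subtype.val '' (P : Set R) = Q) {x : R} : (x : T) ∈ Q ↔ x ∈ P := by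
  rw [← SetLike.mem_coe, ← hPQ, Subtype.val_injective.mem_set_image, SetLike.mem_coe]

theorem isDivided_iff_of_image_eq (hunit : ∀ x ∉ R, IsUnit x) {P : Ideal R} {Q : Ideal T}
    (hPQ : Subtype.val '' (P : Set R) = Q) : P.IsDivided ↔ Q.IsDivided := by
  simp only [Ideal.isDivided_iff_le_span_singleton]
  constructor
  · intro hP x hx q hq
    by_cases hxR : x ∈ R
    · rw [← SetLike.mem_coe, ← hPQ] at hq
      obtain ⟨p, hp, rfl⟩ := hq
      have hxP : (⟨x, hxR⟩ : R) ∉ P := fun h => hx ((coe_mem_iff_of_image_eq hPQ).mpr h)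
      obtain ⟨c, rfl⟩ := Ideal.mem_span_singleton'.mp (hP _ hxP hp)
      exact Ideal.mem_span_singleton'.mpr ⟨c, rfl⟩
    · rw [Ideal.span_singleton_eq_top.mpr (hunit x hxR)]
      exact Submodule.mem_top
  · intro hQ x hx p hp
    have hxQ : (x : T) ∉ Q := fun h => hx ((coe_mem_iff_of_image_eq hPQ).mp h)
    obtain ⟨t, ht⟩ :=
      Ideal.mem_span_singleton'.mp (hQ x hxQ ((coe_mem_iff_of_image_eq hPQ).mpr hp))
    by_cases htR : t ∈ R
    · exact Ideal.mem_span_singleton'.mpr ⟨⟨t, htR⟩, Subtype.ext ht⟩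
    · have hu := hunit t htR
      have hx_eq : (x : T) = ↑hu.unit⁻¹ * p := by
        rw [← ht, ← mul_assoc, IsUnit.val_inv_mul, one_mul]
      exact absurd (hx_eq ▸ Q.mul_mem_left _ ((coe_mem_iff_of_image_eq hPQ).mpr hp)) hxQ

end Subring

namespace SpecEq

variable {T : Type*} [CommRing T] {R : Subring T}

theorem exists_isPrime_image_eq (hspec : SpecEq R) {Q : Ideal T} (hQ : Q.IsPrime) :
    ∃ P : Ideal R, P.IsPrime ∧ Subtype.val '' (P : Set R) = Q :=
  (hspec Q).mp ⟨Q, hQ, rfl⟩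

theorem exists_isPrime_eq_image (hspec : SpecEq R) {P : Ideal R} (hP : P.IsPrime) :
    ∃ Q : Ideal T, Q.IsPrime ∧ Subtype.val '' (P : Set R) = Q := by
  obtain ⟨Q, hQ, hQP⟩ := (hspec _).mpr ⟨P, hP, rfl⟩
  exact ⟨Q, hQ, hQP.symm⟩

theorem isUnit_of_notMem (hspec : SpecEq R) {x : T} (hx : x ∉ R) : IsUnit x := by
  by_contra h
  obtain ⟨M, hM, hxM⟩ := (Ideal.span {x}).exists_le_maximal
    (by rwa [ne_eq, Ideal.span_singleton_eq_top])
  obtain ⟨P, -, hPM⟩ := hspec.exists_isPrime_image_eq hM.isPrime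
  have hxM' : x ∈ (M : Set T) := hxM (Ideal.mem_span_singleton_self x)
  rw [← hPM] at hxM'
  obtain ⟨y, -, rfl⟩ := hxM'
  exact hx y.2

end SpecEq

theorem stmt5_general {T : Type*} [CommRing T] (R : Subring T)
    (hspec : SpecEq R) :
    DividedRing ↥R ↔ DividedRing T := by
  have hunit : ∀ x ∉ R, IsUnit x := fun _ => hspec.isUnit_of_notMem
  constructor
  · intro hR Q hQ
    obtain ⟨P, hP, hPQ⟩ := hspec.exists_isPrime_image_eq hQ
    exact (Subring.isDivided_iff_of_image_eq hunit hPQ).mp (hR P hP)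
  · intro hT P hP
    obtain ⟨Q, hQ, hPQ⟩ := hspec.exists_isPrime_eq_image hP
    exact (Subring.isDivided_iff_of_image_eq hunit hPQ).mpr (hT Q hQ)

/-- Let `R ∈ H` and let `T` be a ring properly containing `R` with
`Spec(R) = Spec(T)`.  Then `R` is divided iff `T` is divided. -/
theorem stmt5 {T : Type*} [CommRing T] (R : Subring T)
    (hR : MemH ↥R) (hproper : R ≠ ⊤) (hspec : SpecEq R) :
    DividedRing ↥R ↔ DividedRing T :=
  stmt5_general R hspec
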